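/- arXiv:2304.07217 — 4 statements merged into one kernel-verified Lean document; each statement's English description precedes it below -/
import Mathlib

section
/- Let M be an n×n matrix over a commutative ring R and y an indeterminate commuting with R. Then det(M + yJ) = det(M) + y·cof(M), where J is the all-ones matrix and cof(M) = Σ_{i,j} (-1)^{i+j} det(M_{i,j}) is the sum of all cofactors of M (M_{i,j} being M with row i and column j deleted). -/
open Matrix Polynomial

/-!
Every row of `M + yJ` is the corresponding row of `M` plus the constant row `y`. Expanding the
determinant multilinearly in the rows, a term that uses the constant row twice vanishes, and the
term using it only in row `i` is `y` times the sum of the cofactors along row `i`.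
-/

namespace AlternatingMap

variable {R M N ι : Type*} [CommSemiring R] [AddCommMonoid M] [Module R M] [AddCommMonoid N]
  [Module R N] [Fintype ι] [DecidableEq ι]

theorem map_add_const (f : M [⋀^ι]→ₗ[R] N) (v : ι → M) (w : M) :
    f (fun i => v i + w) = f v + ∑ i, f (Function.update v i w) := by
  have hsum : f (fun i => v i + w) = ∑ s : Finset ι, f (s.piecewise (fun _ => w) v) := by
    rw [← map_add_univ]; congr 1; ext i; exact add_comm _ _
  have hvanish : ∀ s : Finset ι, s.Nontrivial → f (s.piecewise (fun _ => w) v) = 0 := by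
    rintro s ⟨i, hi, j, hj, hij⟩
    exact f.map_eq_zero_of_eq _
      (by rw [Finset.piecewise_eq_of_mem _ _ _ hi, Finset.piecewise_eq_of_mem _ _ _ hj]) hij
  let singletons : Finset (Finset ι) := Finset.univ.map ⟨singleton, Finset.singleton_injective⟩
  have hempty : ∅ ∉ singletons := by simp [singletons]
  rw [hsum, ← Finset.sum_subset (Finset.subset_univ (insert ∅ singletons)),
    Finset.sum_insert hempty, Finset.sum_map]
  · simp [Finset.piecewise_singleton]
  · intro s _ hs
    obtain rfl | hne := s.eq_empty_or_nonempty
    · exact absurd (Finset.mem_insert_self _ _) hs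
    obtain ⟨i, rfl⟩ | hnt := hne.exists_eq_singleton_or_nontrivial
    · exact absurd (by simp [singletons]) hs
    · exact hvanish s hnt

end AlternatingMap

namespace Matrix

variable {S ι : Type*} [CommRing S] [Fintype ι] [DecidableEq ι]

theorem det_updateRow_const (A : Matrix ι ι S) (i : ι) (c : S) :
    (A.updateRow i fun _ => c).det = c * ∑ j, A.adjugate j i := by
  rw [← cramer_transpose_apply, cramer_eq_adjugate_mulVec, mulVec, dotProduct, Finset.mul_sum]
  simp [← adjugate_transpose, mul_comm]

theorem det_add_const (A : Matrix ι ι S) (c : S) :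
    (A + of fun _ _ => c).det = A.det + c * ∑ i, ∑ j, A.adjugate j i := by
  rw [Finset.mul_sum]
  simp only [← det_updateRow_const]
  exact detRowAlternating.map_add_const A (fun _ => c)

end Matrix

/-- det(M + yJ) = det(M) + y·cof(M), with y an indeterminate commuting with R. -/
theorem stmt_0 {R : Type*} [CommRing R] {n : ℕ} (M : Matrix (Fin (n + 1)) (Fin (n + 1)) R) :
    (M.map Polynomial.C + Matrix.of fun _ _ => (Polynomial.X : R[X])).det
      = Polynomial.C M.det + Polynomial.X *
          Polynomial.C (∑ i : Fin (n + 1), ∑ j : Fin (n + 1),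
            (-1 : R) ^ ((i : ℕ) + (j : ℕ)) * (M.submatrix i.succAbove j.succAbove).det) := by
  rw [det_add_const, RingHom.map_det]
  simp [adjugate_fin_succ_eq_det_submatrix, ← submatrix_map, RingHom.map_det]
end

section
/- Let G and H be graphs on n vertices, and suppose for two distinct real numbers y₁ ≠ y₂ the matrices y₁J − M(G) and y₁J − M(H) are cospectral, and y₂J − M(G) and y₂J − M(H) are cospectral, where M is any fixed symmetric matrix assignment. Then yJ − M(G) and yJ − M(H) are cospectral for every real y; in particular det(xI + M(G)) = det(xI + M(H)) and cof(xI + M(G)) = cof(xI + M(H)) as polynomials in x. -/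
open Matrix Polynomial

variable {R : Type*} [CommRing R]

/-- The sum of all (signed) cofactors of a matrix. -/
def cofSum {m : ℕ} (A : Matrix (Fin (m + 1)) (Fin (m + 1)) R) : R :=
  ∑ i : Fin (m + 1), ∑ j : Fin (m + 1),
    (-1 : R) ^ ((i : ℕ) + (j : ℕ)) * ((A.submatrix i.succAbove j.succAbove)).det

lemma det_updateRow_ones {m : ℕ} (A : Matrix (Fin (m + 1)) (Fin (m + 1)) R) (i : Fin (m + 1)) :
    (A.updateRow i (fun _ => 1)).det
      = ∑ j : Fin (m + 1), (-1 : R) ^ ((i : ℕ) + (j : ℕ))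
          * ((A.submatrix i.succAbove j.succAbove)).det := by
  rw [det_succ_row _ i]
  refine Finset.sum_congr rfl fun j _ => ?_
  rw [submatrix_updateRow_succAbove]
  simp [updateRow_self]

lemma det_add_smul_ones {m : ℕ} (A : Matrix (Fin (m + 1)) (Fin (m + 1)) R) (y : R) :
    (A + y • Matrix.of (fun _ _ => (1 : R))).det = A.det + y * cofSum A := by
  classical
  set f := (detRowAlternating : (Fin (m + 1) → R) [⋀^Fin (m + 1)]→ₗ[R] R) with hf
  set b : Matrix (Fin (m + 1)) (Fin (m + 1)) R := Matrix.of (fun _ _ => y) with hb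
  have hAb : A + y • Matrix.of (fun _ _ => (1 : R)) = b + A := by
    ext i j
    simp [hb, Matrix.add_apply, Matrix.smul_apply]
    ring
  have key : f (b + A) = ∑ s : Finset (Fin (m + 1)), f (s.piecewise b A) :=
    f.toMultilinearMap.map_add_univ b A
  set T : Finset (Finset (Fin (m + 1))) :=
    insert ∅ (Finset.univ.image fun i => ({i} : Finset (Fin (m + 1)))) with hT
  have hzero : ∀ s ∈ (Finset.univ : Finset (Finset (Fin (m + 1)))), s ∉ T →
      f (s.piecewise b A) = 0 := by
    intro s _ hs
    have h1 : s ≠ ∅ := by rintro rfl; exact hs (Finset.mem_insert_self _ _)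
    have h2 : ∀ i, s ≠ {i} := by
      rintro i rfl
      exact hs (Finset.mem_insert_of_mem (Finset.mem_image_of_mem _ (Finset.mem_univ i)))
    have hcard : 1 < s.card := by
      rcases Nat.lt_or_ge s.card 2 with h | h
      · interval_cases hc : s.card
        · exact absurd (Finset.card_eq_zero.mp hc) h1
        · obtain ⟨i, hi⟩ := Finset.card_eq_one.mp hc
          exact absurd hi (h2 i)
      · omega
    obtain ⟨i, hi, j, hj, hij⟩ := Finset.one_lt_card.mp hcard
    refine f.map_eq_zero_of_eq _ ?_ hij
    simp [Finset.piecewise, hi, hj, hb]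
    rfl
  have hsub : T ⊆ (Finset.univ : Finset (Finset (Fin (m + 1)))) := Finset.subset_univ _
  have hTsum : ∑ s : Finset (Fin (m + 1)), f (s.piecewise b A)
      = ∑ s ∈ T, f (s.piecewise b A) := (Finset.sum_subset hsub (fun s hs h => hzero s hs h)).symm
  have hempty : (∅ : Finset (Fin (m + 1))) ∉
      Finset.univ.image fun i => ({i} : Finset (Fin (m + 1))) := by
    simp
  have hsingle : ∀ i : Fin (m + 1),
      f (({i} : Finset (Fin (m + 1))).piecewise b A) = y * (A.updateRow i (fun _ => 1)).det := by
    intro i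
    rw [Finset.piecewise_singleton (f := b) (g := A)]
    have : Function.update A i (b i) = A.updateRow i (y • fun _ => (1 : R)) := by
      funext k l
      by_cases h : k = i <;> simp [h, hb, Matrix.updateRow, Function.update]
    show f (Function.update A i (b i)) = _
    rw [this]
    exact det_updateRow_smul A i y (fun _ => 1)
  calc (A + y • Matrix.of (fun _ _ => (1 : R))).det
      = f (b + A) := by rw [hAb]; rfl
    _ = ∑ s ∈ T, f (s.piecewise b A) := by rw [key, hTsum]
    _ = f ((∅ : Finset (Fin (m + 1))).piecewise b A)
        + ∑ i : Fin (m + 1), f (({i} : Finset (Fin (m + 1))).piecewise b A) := by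
        rw [hT, Finset.sum_insert hempty,
          Finset.sum_image (fun i _ j _ h => Finset.singleton_injective h)]
    _ = A.det + y * cofSum A := by
        rw [Finset.piecewise_empty (f := b) (g := A)]
        congr 1
        simp only [hsingle, det_updateRow_ones]
        rw [← Finset.mul_sum]
        rfl

lemma charpoly_smul_ones_sub {m : ℕ} (A : Matrix (Fin (m + 1)) (Fin (m + 1)) ℝ) (y : ℝ) :
    (y • Matrix.of (fun _ _ => (1 : ℝ)) - A).charpoly
      = ((X : ℝ[X]) • (1 : Matrix (Fin (m + 1)) (Fin (m + 1)) ℝ[X]) + A.map C).det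
        - C y * cofSum ((X : ℝ[X]) • (1 : Matrix (Fin (m + 1)) (Fin (m + 1)) ℝ[X]) + A.map C) := by
  have hmat : charmatrix (y • Matrix.of (fun _ _ => (1 : ℝ)) - A)
      = ((X : ℝ[X]) • (1 : Matrix (Fin (m + 1)) (Fin (m + 1)) ℝ[X]) + A.map C)
        + (-(C y)) • Matrix.of (fun _ _ => (1 : ℝ[X])) := by
    ext i j
    by_cases h : i = j <;>
      simp [h, charmatrix, Matrix.add_apply, Matrix.smul_apply, Matrix.sub_apply,
        Matrix.one_apply, Matrix.map_apply, map_sub] <;> ring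
  rw [Matrix.charpoly, hmat, det_add_smul_ones]
  ring

/-- If y₁J − M and y₁J − N are cospectral and y₂J − M and y₂J − N are cospectral for two
distinct reals y₁ ≠ y₂ (M, N symmetric), then yJ − M and yJ − N are cospectral for every
real y; in particular det(xI + M) = det(xI + N) and cof(xI + M) = cof(xI + N) as
polynomials in x. -/
theorem stmt_13 {n : ℕ} (M N : Matrix (Fin (n + 1)) (Fin (n + 1)) ℝ)
    (hM : M.IsSymm) (hN : N.IsSymm) (y₁ y₂ : ℝ) (hy : y₁ ≠ y₂)
    (h1 : (y₁ • Matrix.of (fun _ _ => (1 : ℝ)) - M).charpoly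
        = (y₁ • Matrix.of (fun _ _ => (1 : ℝ)) - N).charpoly)
    (h2 : (y₂ • Matrix.of (fun _ _ => (1 : ℝ)) - M).charpoly
        = (y₂ • Matrix.of (fun _ _ => (1 : ℝ)) - N).charpoly) :
    let P : Matrix (Fin (n + 1)) (Fin (n + 1)) ℝ → Matrix (Fin (n + 1)) (Fin (n + 1)) ℝ[X] :=
      fun A => (Polynomial.X : ℝ[X]) • (1 : Matrix (Fin (n + 1)) (Fin (n + 1)) ℝ[X]) + A.map Polynomial.C
    (∀ y : ℝ, (y • Matrix.of (fun _ _ => (1 : ℝ)) - M).charpoly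
        = (y • Matrix.of (fun _ _ => (1 : ℝ)) - N).charpoly) ∧
    (P M).det = (P N).det ∧
    (∑ i : Fin (n + 1), ∑ j : Fin (n + 1), (-1 : ℝ[X]) ^ ((i : ℕ) + (j : ℕ)) *
        ((P M).submatrix i.succAbove j.succAbove).det
      = ∑ i : Fin (n + 1), ∑ j : Fin (n + 1), (-1 : ℝ[X]) ^ ((i : ℕ) + (j : ℕ)) *
        ((P N).submatrix i.succAbove j.succAbove).det) := by
  intro P
  have e1 := h1
  have e2 := h2
  rw [charpoly_smul_ones_sub M y₁, charpoly_smul_ones_sub N y₁] at e1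
  rw [charpoly_smul_ones_sub M y₂, charpoly_smul_ones_sub N y₂] at e2
  have hc : cofSum ((X : ℝ[X]) • (1 : Matrix (Fin (n + 1)) (Fin (n + 1)) ℝ[X]) + M.map C)
      = cofSum ((X : ℝ[X]) • (1 : Matrix (Fin (n + 1)) (Fin (n + 1)) ℝ[X]) + N.map C) := by
    have hkey : ((C y₁ : ℝ[X]) - C y₂)
        * (cofSum ((X : ℝ[X]) • (1 : Matrix (Fin (n + 1)) (Fin (n + 1)) ℝ[X]) + M.map C)
          - cofSum ((X : ℝ[X]) • (1 : Matrix (Fin (n + 1)) (Fin (n + 1)) ℝ[X]) + N.map C)) = 0 := by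
      linear_combination e2 - e1
    rcases mul_eq_zero.mp hkey with h | h
    · exact absurd h (sub_ne_zero.mpr fun h' => hy (C_injective h'))
    · exact sub_eq_zero.mp h
  have hD : ((X : ℝ[X]) • (1 : Matrix (Fin (n + 1)) (Fin (n + 1)) ℝ[X]) + M.map C).det
      = ((X : ℝ[X]) • (1 : Matrix (Fin (n + 1)) (Fin (n + 1)) ℝ[X]) + N.map C).det := by
    linear_combination e1 + C y₁ * hc
  refine ⟨fun y => ?_, hD, hc⟩
  rw [charpoly_smul_ones_sub M y, charpoly_smul_ones_sub N y, hD, hc]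
end

section
/- Two real symmetric integer matrices M(G) and M(H) of size n×n are cospectral if and only if xI − M(G) and xI − M(H) have the same k-th determinantal ideals over ℚ[x] for all 1 ≤ k ≤ n. (In particular, cospectrality implies codeterminantality over ℚ[x].) -/
/-!
A real symmetric matrix is orthogonally diagonalizable, and its diagonal form is determined by
its characteristic polynomial. Hence cospectral symmetric matrices `A`, `B` are similar over `ℝ`,
so `xI - A` and `xI - B` differ by invertible factors over `ℝ[x]`; by multilinearity of the
determinant in the rows, such factors do not change the ideals of `k × k` minors. These ideals
descend from `ℝ[x]` to `ℚ[x]`: both rings are principal ideal domains and divisibility of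
rational polynomials does not depend on the field in which it is tested.

Conversely, the `n`-th determinantal ideal of `xI - A` is generated by the monic polynomial
`det (xI - A)`, which it therefore determines.
-/

open Matrix Polynomial

namespace Matrix

variable {R S : Type*} [CommRing R] [CommRing S] {l m n o : Type*} {k : ℕ}

def determinantalIdeal (k : ℕ) (A : Matrix m n R) : Ideal R :=
  Ideal.span {p | ∃ f : Fin k → m, ∃ g : Fin k → n,
    Function.Injective f ∧ Function.Injective g ∧ p = (A.submatrix f g).det}

theorem det_submatrix_mem_determinantalIdeal (A : Matrix m n R) (r : Fin k → m)
    {g : Fin k → n} (hg : Function.Injective g) :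
    (A.submatrix r g).det ∈ A.determinantalIdeal k := by
  by_cases hr : Function.Injective r
  · exact Ideal.subset_span ⟨r, g, hr, hg, rfl⟩
  · obtain ⟨i, j, hij, hne⟩ : ∃ i j, r i = r j ∧ i ≠ j := by
      simpa [Function.Injective] using hr
    rw [det_zero_of_row_eq hne (by ext; simp [hij])]
    exact zero_mem _

theorem determinantalIdeal_mul_le_left [Fintype m] (B : Matrix l m R) (A : Matrix m n R) :
    (B * A).determinantalIdeal k ≤ A.determinantalIdeal k := by
  classical
  refine Ideal.span_le.mpr ?_
  rintro _ ⟨f, g, -, hg, rfl⟩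
  have hrows : (B * A).submatrix f g = fun i => ∑ r, B (f i) r • fun j => A r (g j) := by
    ext i j
    simp [mul_apply, Finset.sum_apply]
  -- Expanding the determinant multilinearly in the rows, each term is a multiple of a minor of `A`.
  rw [hrows]
  change detRowAlternating _ ∈ _
  rw [← AlternatingMap.coe_multilinearMap, MultilinearMap.map_sum]
  refine Ideal.sum_mem _ fun r _ => ?_
  rw [MultilinearMap.map_smul_univ]
  exact Ideal.mul_mem_left _ _ (det_submatrix_mem_determinantalIdeal A r hg)

theorem determinantalIdeal_transpose (A : Matrix m n R) :
    Aᵀ.determinantalIdeal k = A.determinantalIdeal k := by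
  unfold determinantalIdeal
  congr 1
  ext p
  constructor
  · rintro ⟨f, g, hf, hg, rfl⟩
    exact ⟨g, f, hg, hf, det_transpose _⟩
  · rintro ⟨f, g, hf, hg, rfl⟩
    exact ⟨g, f, hg, hf, (det_transpose _).symm⟩

theorem determinantalIdeal_mul_le_right [Fintype n] (A : Matrix m n R) (C : Matrix n o R) :
    (A * C).determinantalIdeal k ≤ A.determinantalIdeal k := by
  have h := determinantalIdeal_mul_le_left (k := k) Cᵀ Aᵀ
  rwa [← transpose_mul, determinantalIdeal_transpose, determinantalIdeal_transpose] at h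

theorem determinantalIdeal_mul_mul_of_isUnit [Fintype m] [Fintype n] [DecidableEq m]
    [DecidableEq n] {B : Matrix m m R} {C : Matrix n n R} (hB : IsUnit B) (hC : IsUnit C)
    (A : Matrix m n R) : (B * A * C).determinantalIdeal k = A.determinantalIdeal k := by
  have le_of_mul (B : Matrix m m R) (A : Matrix m n R) (C : Matrix n n R) :
      (B * A * C).determinantalIdeal k ≤ A.determinantalIdeal k :=
    (determinantalIdeal_mul_le_right _ C).trans (determinantalIdeal_mul_le_left B A)
  obtain ⟨B, rfl⟩ := hB
  obtain ⟨C, rfl⟩ := hC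
  have hA : A = B⁻¹.val * (B.val * A * C.val) * C⁻¹.val := by
    rw [← Matrix.mul_assoc, ← Matrix.mul_assoc, Units.inv_mul, Matrix.one_mul, Matrix.mul_assoc,
      Units.mul_inv, Matrix.mul_one]
  refine (le_of_mul _ _ _).antisymm ?_
  conv_lhs => rw [hA]
  exact le_of_mul _ _ _

theorem determinantalIdeal_map (φ : R →+* S) (A : Matrix m n R) :
    (A.map φ).determinantalIdeal k = (A.determinantalIdeal k).map φ := by
  rw [determinantalIdeal, determinantalIdeal, Ideal.map_span]
  congr 1
  ext p
  constructor
  · rintro ⟨f, g, hf, hg, rfl⟩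
    exact ⟨_, ⟨f, g, hf, hg, rfl⟩, by simp [RingHom.map_det, submatrix_map]⟩
  · rintro ⟨_, ⟨f, g, hf, hg, rfl⟩, rfl⟩
    exact ⟨f, g, hf, hg, by simp [RingHom.map_det, submatrix_map]⟩

theorem determinantalIdeal_card [Fintype n] [DecidableEq n] (A : Matrix n n R) :
    A.determinantalIdeal (Fintype.card n) = Ideal.span {A.det} := by
  refine le_antisymm (Ideal.span_le.mpr ?_) (Ideal.span_le.mpr ?_)
  · rintro _ ⟨f, g, hf, hg, rfl⟩
    have bijective {f : Fin (Fintype.card n) → n} (hf : f.Injective) : f.Bijective :=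
      (Fintype.bijective_iff_injective_and_card f).mpr ⟨hf, by simp⟩
    let ef := Equiv.ofBijective f (bijective hf)
    let eg := Equiv.ofBijective g (bijective hg)
    have : A.submatrix f g = (A.submatrix id (ef.symm.trans eg)).submatrix ef ef := by
      ext i j; simp [ef, eg]
    rw [SetLike.mem_coe, this, det_submatrix_equiv_self, det_permute', Ideal.mem_span_singleton]
    exact dvd_mul_left _ _
  · rintro _ rfl
    let e := (Fintype.equivFin n).symm
    exact Ideal.subset_span
      ⟨e, e, e.injective, e.injective, (det_submatrix_equiv_self e A).symm⟩

theorem charmatrix_mul_mul_of_mul_eq_one [Fintype n] [DecidableEq n] {U V : Matrix n n R}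
    (h : U * V = 1) (A : Matrix n n R) :
    charmatrix (U * A * V) = U.map C * charmatrix A * V.map C := by
  have hUV : U.map C * V.map C = 1 := by
    rw [← Matrix.map_mul, h, Matrix.map_one _ C.map_zero C.map_one]
  rw [charmatrix, charmatrix, RingHom.mapMatrix_apply, RingHom.mapMatrix_apply, Matrix.map_mul,
    Matrix.map_mul, Matrix.mul_sub, Matrix.sub_mul,
    ← (scalar_commute X (fun _ => Commute.all _ _) _).eq, Matrix.mul_assoc (scalar n X), hUV,
    Matrix.mul_one]

theorem determinantalIdeal_charmatrix_mul_mul_of_mul_eq_one [Fintype n] [DecidableEq n]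
    {U V : Matrix n n R} (h : U * V = 1) (A : Matrix n n R) :
    (charmatrix (U * A * V)).determinantalIdeal k = (charmatrix A).determinantalIdeal k := by
  rw [charmatrix_mul_mul_of_mul_eq_one h]
  exact determinantalIdeal_mul_mul_of_isUnit
    ((IsUnit.of_mul_eq_one _ h).map (C : R →+* R[X]).mapMatrix)
    ((IsUnit.of_mul_eq_one_right _ h).map (C : R →+* R[X]).mapMatrix) _

theorem IsHermitian.determinantalIdeal_charmatrix_eq {𝕜 : Type*} [RCLike 𝕜] [Fintype n]
    [DecidableEq n] {A : Matrix n n 𝕜} (hA : A.IsHermitian) :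
    (charmatrix A).determinantalIdeal k =
      (charmatrix (diagonal (RCLike.ofReal ∘ hA.eigenvalues))).determinantalIdeal k := by
  conv_lhs => rw [hA.spectral_theorem, Unitary.conjStarAlgAut_apply]
  exact determinantalIdeal_charmatrix_mul_mul_of_mul_eq_one (Unitary.coe_mul_star_self _) _

theorem IsHermitian.determinantalIdeal_charmatrix_eq_of_charpoly_eq {𝕜 : Type*} [RCLike 𝕜]
    [Fintype n] [DecidableEq n] {A B : Matrix n n 𝕜} (hA : A.IsHermitian) (hB : B.IsHermitian)
    (h : A.charpoly = B.charpoly) :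
    (charmatrix A).determinantalIdeal k = (charmatrix B).determinantalIdeal k := by
  rw [hA.determinantalIdeal_charmatrix_eq, hB.determinantalIdeal_charmatrix_eq,
    (eigenvalues_eq_eigenvalues_iff hA hB).mpr h]

theorem charpoly_eq_of_determinantalIdeal_charmatrix_eq [IsDomain R] [Fintype n]
    [DecidableEq n] {A B : Matrix n n R}
    (h : (charmatrix A).determinantalIdeal (Fintype.card n) =
      (charmatrix B).determinantalIdeal (Fintype.card n)) :
    A.charpoly = B.charpoly := by
  rw [determinantalIdeal_card, determinantalIdeal_card, Ideal.span_singleton_eq_span_singleton] at h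
  exact eq_of_monic_of_associated (charpoly_monic A) (charpoly_monic B) h

theorem charmatrix_eq_smul_one_sub_map [Fintype n] [DecidableEq n] (A : Matrix n n R) :
    charmatrix A = (X : R[X]) • (1 : Matrix n n R[X]) - A.map C := by
  rw [charmatrix, smul_one_eq_diagonal]
  rfl

end Matrix

theorem Polynomial.map_ideal_injective {K L : Type*} [Field K] [Field L] (f : K →+* L) :
    Function.Injective (Ideal.map (mapRingHom f) : Ideal K[X] → Ideal L[X]) := by
  have map_le_map (I J : Ideal K[X]) (h : I.map (mapRingHom f) ≤ J.map (mapRingHom f)) :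
      I ≤ J := by
    rw [← Ideal.span_singleton_generator I, ← Ideal.span_singleton_generator J] at h ⊢
    rw [Ideal.map_span, Ideal.map_span, Set.image_singleton, Set.image_singleton,
      Ideal.span_singleton_le_span_singleton] at h
    rwa [Ideal.span_singleton_le_span_singleton, ← map_dvd_map' f]
  exact fun I J h => (map_le_map I J h.le).antisymm (map_le_map J I h.ge)

theorem Matrix.IsSymm.determinantalIdeal_charmatrix_eq_of_charpoly_eq {K n : Type*} [Field K]
    [Fintype n] [DecidableEq n] (φ : K →+* ℝ) {A B : Matrix n n K} (hA : A.IsSymm)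
    (hB : B.IsSymm) (h : A.charpoly = B.charpoly) (k : ℕ) :
    (charmatrix A).determinantalIdeal k = (charmatrix B).determinantalIdeal k := by
  apply Polynomial.map_ideal_injective φ
  simp only [← determinantalIdeal_map, coe_mapRingHom, ← charmatrix_map]
  refine IsHermitian.determinantalIdeal_charmatrix_eq_of_charpoly_eq ?_ ?_ ?_
  · exact isHermitian_iff_isSymm.mpr (hA.map φ)
  · exact isHermitian_iff_isSymm.mpr (hB.map φ)
  · rw [charpoly_map, charpoly_map, h]

/-- Two symmetric integer matrices are cospectral iff xI − M(G) and xI − M(H) have the same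
k-th determinantal ideals over ℚ[x] for all 1 ≤ k ≤ n. -/
theorem stmt_14 {n : ℕ} (M N : Matrix (Fin n) (Fin n) ℤ)
    (hM : M.IsSymm) (hN : N.IsSymm) :
    let P : Matrix (Fin n) (Fin n) ℤ → Matrix (Fin n) (Fin n) ℚ[X] :=
      fun A => (Polynomial.X : ℚ[X]) • (1 : Matrix (Fin n) (Fin n) ℚ[X])
        - A.map (fun a => Polynomial.C (a : ℚ))
    (M.charpoly = N.charpoly ↔
      ∀ k : ℕ, 1 ≤ k → k ≤ n →
        Ideal.span {p : ℚ[X] | ∃ f g : Fin k → Fin n,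
            Function.Injective f ∧ Function.Injective g ∧ p = ((P M).submatrix f g).det}
          = Ideal.span {p : ℚ[X] | ∃ f g : Fin k → Fin n,
            Function.Injective f ∧ Function.Injective g ∧ p = ((P N).submatrix f g).det}) := by
  intro P
  have hP (A : Matrix (Fin n) (Fin n) ℤ) : P A = charmatrix (A.map (Int.castRingHom ℚ)) := by
    rw [charmatrix_eq_smul_one_sub_map, Matrix.map_map]
    rfl
  change _ ↔ ∀ k, 1 ≤ k → k ≤ n →
    (P M).determinantalIdeal k = (P N).determinantalIdeal k
  simp only [hP]
  constructor
  · intro h k _ _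
    exact (hM.map (Int.castRingHom ℚ)).determinantalIdeal_charmatrix_eq_of_charpoly_eq
      (algebraMap ℚ ℝ) (hN.map _) (by rw [charpoly_map, charpoly_map, h]) k
  · intro h
    rcases n.eq_zero_or_pos with rfl | hn
    · simp [charpoly_isEmpty]
    · apply map_injective (Int.castRingHom ℚ) Int.cast_injective
      rw [← charpoly_map, ← charpoly_map]
      exact charpoly_eq_of_determinantalIdeal_charmatrix_eq 
        (by simpa only [Fintype.card_fin] using h n hn le_rfl)
end

section
/- For the star graph S_{n+1} = K_{1,n} with n ≥ 2, the Smith normal form over ℤ of the transmission-adjacency matrix A^trs(S_{n+1}) = diag(trs) − A is diag(1, 1, 2n−1, …, 2n−1, 2n(n−1)(2n−1)), i.e., invariant factors 1, 1, then (n−2) copies of 2n−1, then 2n(n−1)(2n−1). -/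
/-!
Order the rows as `0, 1, 2, …, n` and the columns as `0, n, 2, …, n - 1, 1`. The leading
`2 × 2` block `[[n, -1], [-1, 0]]` is then unimodular, and its Schur complement is `2n - 1`
times the bordered identity `[[I, -1], [-1, (2n - 1)n - 2]]` of size `n - 1`. The Schur
complement of `I` in the latter is the scalar `(2n - 1)n - 2 - (n - 2) = 2n(n - 1)`, and
both pivot blocks are eliminated by unimodular block-triangular matrices.
-/

open Matrix

namespace Matrix

variable {R : Type*} [CommRing R] {l m n o : Type*}
  [Fintype l] [Fintype m] [Fintype n] [Fintype o]
  [DecidableEq l] [DecidableEq m] [DecidableEq n] [DecidableEq o]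

def UnimodularEquiv (A B : Matrix m n R) : Prop :=
  ∃ U : Matrix m m R, ∃ W : Matrix n n R, IsUnit U.det ∧ IsUnit W.det ∧ U * A * W = B

namespace UnimodularEquiv

theorem refl (A : Matrix m n R) : UnimodularEquiv A A :=
  ⟨1, 1, by simp, by simp, by simp⟩

theorem trans {A B C : Matrix m n R} (hAB : UnimodularEquiv A B) (hBC : UnimodularEquiv B C) :
    UnimodularEquiv A C := by
  obtain ⟨U, W, hU, hW, rfl⟩ := hAB
  obtain ⟨U', W', hU', hW', rfl⟩ := hBC
  refine ⟨U' * U, W * W', by simpa using hU'.mul hU, by simpa using hW.mul hW', ?_⟩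
  simp only [Matrix.mul_assoc]

theorem reindex {m' n' : Type*} [Fintype m'] [Fintype n'] [DecidableEq m'] [DecidableEq n']
    {A B : Matrix m n R} (e : m ≃ m') (f : n ≃ n') (h : UnimodularEquiv A B) :
    UnimodularEquiv (A.reindex e f) (B.reindex e f) := by
  obtain ⟨U, W, hU, hW, rfl⟩ := h
  refine ⟨U.reindex e e, W.reindex f f, by simpa using hU, by simpa using hW, ?_⟩
  simp only [reindex_apply, submatrix_mul_equiv]

theorem smul {A B : Matrix m n R} (c : R) (h : UnimodularEquiv A B) :
    UnimodularEquiv (c • A) (c • B) := by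
  obtain ⟨U, W, hU, hW, rfl⟩ := h
  exact ⟨U, W, hU, hW, by rw [Matrix.mul_smul, Matrix.smul_mul]⟩

theorem fromBlocks_zero {A A' : Matrix l m R} {D D' : Matrix n o R}
    (hA : UnimodularEquiv A A') (hD : UnimodularEquiv D D') :
    UnimodularEquiv (fromBlocks A 0 0 D) (fromBlocks A' 0 0 D') := by
  obtain ⟨U, W, hU, hW, rfl⟩ := hA
  obtain ⟨U', W', hU', hW', rfl⟩ := hD
  refine ⟨fromBlocks U 0 0 U', fromBlocks W 0 0 W', ?_, ?_, ?_⟩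
  · simpa [det_fromBlocks_zero₂₁] using hU.mul hU'
  · simpa [det_fromBlocks_zero₂₁] using hW.mul hW'
  · simp [fromBlocks_multiply]

end UnimodularEquiv

theorem unimodularEquiv_submatrix_id (A : Matrix m n R) (σ : Equiv.Perm n) :
    UnimodularEquiv (A.submatrix id σ) A := by
  refine ⟨1, (1 : Matrix n n R).submatrix σ id, by simp, ?_, ?_⟩
  · simpa [det_permute] using (Equiv.Perm.sign σ).isUnit.map (Int.castRingHom R)
  · rw [Matrix.one_mul, submatrix_mul_equiv, Matrix.mul_one, submatrix_id_id]

theorem fromBlocks_unimodularEquiv_of_mul_eq_one {A A' : Matrix l l R} (B : Matrix l n R)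
    (C : Matrix m l R) (D : Matrix m n R) (hA : A' * A = 1) :
    UnimodularEquiv (fromBlocks A B C D) (fromBlocks 1 0 0 (D - C * A' * B)) := by
  refine ⟨fromBlocks A' 0 (-(C * A')) 1, fromBlocks 1 (-(A' * B)) 0 1, ?_, ?_, ?_⟩
  · simpa [det_fromBlocks_zero₁₂] using isUnit_det_of_right_inverse hA
  · simp
  · simp [fromBlocks_multiply, Matrix.mul_assoc, hA, sub_eq_neg_add]

theorem unimodularEquiv_diagonal_comp_of_reindex {A : Matrix n n R} {d : m → R} (e : n ≃ m)
    (σ : Equiv.Perm n) (h : UnimodularEquiv (A.reindex e (σ.trans e)) (diagonal d)) :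
    UnimodularEquiv A (diagonal (d ∘ e)) := by
  have h' := h.reindex e.symm (σ.trans e).symm
  simp only [reindex_apply, Equiv.symm_symm, submatrix_submatrix, Equiv.symm_comp_self,
    submatrix_id_id] at h'
  have hperm : (diagonal d).submatrix e (σ.trans e) = (diagonal (d ∘ e)).submatrix id σ := by
    rw [← submatrix_diagonal_equiv, submatrix_submatrix]
    rfl
  rw [hperm] at h'
  exact h'.trans (unimodularEquiv_submatrix_id _ σ)

section Star

variable {ι : Type*} [Fintype ι] [DecidableEq ι]

theorem unimodularEquiv_fromBlocks_one_neg_one (x : R) :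
    UnimodularEquiv (fromBlocks (1 : Matrix ι ι R) (of fun _ _ => -1) (of fun _ _ => -1) !![x])
      (fromBlocks 1 0 0 !![x - Fintype.card ι]) := by
  convert fromBlocks_unimodularEquiv_of_mul_eq_one (of fun _ _ => -1) (of fun _ _ => -1) !![x]
    (Matrix.one_mul (1 : Matrix ι ι R)) using 2
  ext i j
  simp [Matrix.mul_apply]

-- `k` and `a` stand for the transmissions `n` and `2n - 1` of the centre and of a leaf.
theorem unimodularEquiv_fromBlocks_star (k a : R) :
    UnimodularEquiv
      (fromBlocks !![k, -1; -1, 0]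
        (of fun i j => if i = 0 then -1 else if j.isRight then a else 0 :
          Matrix (Fin 2) (ι ⊕ Fin 1) R)
        (of fun i j => if j = 0 then -1 else if i.isRight then a else 0)
        (fromBlocks (a • (1 : Matrix ι ι R)) 0 0 0))
      (fromBlocks 1 0 0
        (a • fromBlocks 1 (of fun _ _ => -1) (of fun _ _ => -1) !![a * k - 2])) := by
  have hA : !![0, -1; -1, -k] * !![k, -1; -1, 0] = (1 : Matrix (Fin 2) (Fin 2) R) := by
    simp [Matrix.one_fin_two]
  convert fromBlocks_unimodularEquiv_of_mul_eq_one (m := ι ⊕ Fin 1) (n := ι ⊕ Fin 1) _ _ _ hA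
    using 2
  ext (i | j) (i' | j') <;> simp [Matrix.mul_apply, Fin.sum_univ_two, one_apply]
  ring

end Star

end Matrix

namespace SimpleGraph

variable {V : Type*} {r : V}

noncomputable def transmission [Fintype V] (G : SimpleGraph V) (v : V) : ℕ := ∑ u, G.dist u v

noncomputable def transmissionAdjMatrix [Fintype V] [DecidableEq V] (G : SimpleGraph V)
    [DecidableRel G.Adj] : Matrix V V ℤ :=
  diagonal (fun v => (G.transmission v : ℤ)) - G.adjMatrix ℤ

theorem dist_starGraph [DecidableEq V] (u v : V) :
    (starGraph r).dist u v = if u = v then 0 else if u = r ∨ v = r then 1 else 2 := by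
  split_ifs with huv hc
  · simp [huv]
  · exact dist_eq_one_iff_adj.mpr (starGraph_adj.mpr ⟨huv, hc⟩)
  · rw [not_or] at hc
    have hr : r ∈ (starGraph r).commonNeighbors u v := by
      simp [mem_commonNeighbors, hc.1, hc.2]
    have hne : ¬(starGraph r).Adj u v := by simp [hc.1, hc.2]
    simp [dist, edist_eq_two_iff.mpr ⟨huv, hne, r, hr⟩]

theorem transmission_starGraph [Fintype V] [DecidableEq V] (v : V) :
    ((starGraph r).transmission v : ℤ) =
      if v = r then (Fintype.card V : ℤ) - 1 else 2 * (Fintype.card V : ℤ) - 3 := by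
  have hdist : ∀ u, ((starGraph r).dist u v : ℤ) =
      if v = r then 1 - (if u = r then 1 else 0)
      else 2 - (if u = v then 2 else 0) - (if u = r then 1 else 0) := by
    intro u
    rw [dist_starGraph]
    by_cases hv : v = r <;> by_cases hu : u = r <;> by_cases huv : u = v <;> simp_all
  rw [transmission, Nat.cast_sum, Finset.sum_congr rfl fun u _ => hdist u]
  split_ifs
  · simp [Finset.sum_sub_distrib]
  · simp [Finset.sum_sub_distrib]
    ring

theorem transmissionAdjMatrix_starGraph_apply [Fintype V] [DecidableEq V]
    [DecidableRel (starGraph r).Adj] (u v : V) :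
    (starGraph r).transmissionAdjMatrix u v =
      if u = v then (if u = r then (Fintype.card V : ℤ) - 1 else 2 * (Fintype.card V : ℤ) - 3)
      else if u = r ∨ v = r then -1 else 0 := by
  by_cases huv : u = v
  · subst huv
    simp [transmissionAdjMatrix, transmission_starGraph]
  · simp [transmissionAdjMatrix, huv, apply_ite Neg.neg]

end SimpleGraph

open SimpleGraph

def finSplitTwoLast (m : ℕ) : Fin (m + 3) ≃ Fin 2 ⊕ (Fin m ⊕ Fin 1) :=
  (finCongr (by omega)).trans
    (finSumFinEquiv.symm.trans (Equiv.sumCongr (Equiv.refl _) finSumFinEquiv.symm))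

@[simp] theorem finSplitTwoLast_symm_inl_val (m : ℕ) (i : Fin 2) :
    ((finSplitTwoLast m).symm (.inl i) : ℕ) = i := by
  simp [finSplitTwoLast]

@[simp] theorem finSplitTwoLast_symm_inr_inl_val (m : ℕ) (k : Fin m) :
    ((finSplitTwoLast m).symm (.inr (.inl k)) : ℕ) = k + 2 := by
  simp [finSplitTwoLast]

@[simp] theorem finSplitTwoLast_symm_inr_inr_val (m : ℕ) (j : Fin 1) :
    ((finSplitTwoLast m).symm (.inr (.inr j)) : ℕ) = m + 2 := by
  simp [finSplitTwoLast, Fin.fin_one_eq_zero j]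

theorem val_swap_one_last {m : ℕ} (x : Fin (m + 3)) :
    (Equiv.swap 1 (Fin.last _) x : ℕ) =
      if (x : ℕ) = 1 then m + 2 else if (x : ℕ) = m + 2 then 1 else x := by
  simp only [Equiv.swap_apply_def, Fin.ext_iff, Fin.val_last]
  split_ifs <;> simp_all

theorem transmissionAdjMatrix_starGraph_fin_apply {m : ℕ}
    [DecidableRel (starGraph (0 : Fin (m + 3))).Adj] (u v : Fin (m + 3)) :
    (starGraph 0).transmissionAdjMatrix u v =
      if (u : ℕ) = v then (if (u : ℕ) = 0 then (m : ℤ) + 2 else 2 * m + 3)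
      else if (u : ℕ) = 0 ∨ (v : ℕ) = 0 then -1 else 0 := by
  simp only [transmissionAdjMatrix_starGraph_apply, Fin.ext_iff, Fintype.card_fin, Fin.val_zero]
  push_cast
  split_ifs <;> ring

theorem reindex_transmissionAdjMatrix_starGraph (m : ℕ)
    [DecidableRel (starGraph (0 : Fin (m + 3))).Adj] :
    (starGraph (0 : Fin (m + 3))).transmissionAdjMatrix.reindex (finSplitTwoLast m)
        ((Equiv.swap 1 (Fin.last _)).trans (finSplitTwoLast m)) =
      fromBlocks !![(m + 2 : ℤ), -1; -1, 0]
        (of fun i j => if i = 0 then -1 else if j.isRight then 2 * m + 3 else 0)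
        (of fun i j => if j = 0 then -1 else if i.isRight then 2 * m + 3 else 0)
        (fromBlocks ((2 * m + 3 : ℤ) • 1) 0 0 0) := by
  ext (i | k | j) (i' | k' | j')
  all_goals simp only [reindex_apply, submatrix_apply, Equiv.symm_trans_apply, Equiv.symm_swap,
    transmissionAdjMatrix_starGraph_fin_apply, val_swap_one_last, finSplitTwoLast_symm_inl_val,
    finSplitTwoLast_symm_inr_inl_val, finSplitTwoLast_symm_inr_inr_val, fromBlocks_apply₁₁,
    fromBlocks_apply₁₂, fromBlocks_apply₂₁, fromBlocks_apply₂₂, of_apply, Sum.isRight_inl,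
    Sum.isRight_inr]
  · fin_cases i <;> fin_cases i' <;> simp
  · fin_cases i <;> simp [k'.isLt.ne]
  · fin_cases i <;> simp
  · fin_cases i' <;> simp [k.isLt.ne]
  · simp [one_apply, Fin.ext_iff]
    split_ifs <;> omega
  · simp
  · fin_cases i' <;> simp
  · simp [k'.isLt.ne]
    omega
  · simp

theorem reindex_transmissionAdjMatrix_starGraph_unimodularEquiv (m : ℕ)
    [DecidableRel (starGraph (0 : Fin (m + 3))).Adj] :
    UnimodularEquiv ((starGraph 0).transmissionAdjMatrix.reindex (finSplitTwoLast m)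
        ((Equiv.swap 1 (Fin.last _)).trans (finSplitTwoLast m)))
      (diagonal (Sum.elim 1 (Sum.elim (fun _ => 2 * m + 3)
        fun _ => (2 * m + 3) * ((2 * m + 3) * (m + 2) - 2 - m)))) := by
  rw [reindex_transmissionAdjMatrix_starGraph]
  refine (unimodularEquiv_fromBlocks_star _ _).trans ?_
  convert (UnimodularEquiv.refl (1 : Matrix (Fin 2) (Fin 2) ℤ)).fromBlocks_zero
    ((unimodularEquiv_fromBlocks_one_neg_one (ι := Fin m) _).smul (2 * m + 3 : ℤ)) using 1
  ext (i | k | j) (i' | k' | j') <;>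
    simp [one_apply, diagonal_apply, fromBlocks_smul, smul_one_eq_diagonal, Fin.fin_one_eq_zero]

theorem transmissionAdjMatrix_starGraph_unimodularEquiv (m : ℕ)
    [DecidableRel (starGraph (0 : Fin (m + 3))).Adj] :
    UnimodularEquiv (starGraph (0 : Fin (m + 3))).transmissionAdjMatrix
      (diagonal fun i => if (i : ℕ) ≤ 1 then 1
        else if (i : ℕ) = m + 2 then (2 * m + 3) * ((2 * m + 3) * (m + 2) - 2 - m)
        else 2 * m + 3) := by
  convert unimodularEquiv_diagonal_comp_of_reindex _ _
    (reindex_transmissionAdjMatrix_starGraph_unimodularEquiv m) using 2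
  funext i
  obtain ⟨x, rfl⟩ := (finSplitTwoLast m).symm.surjective i
  rcases x with i | k | j
  · simp [i.is_le]
  · simp
    omega
  · simp

/-- The Smith normal form over ℤ of the transmission-adjacency matrix of the star K_{1,n}
(n ≥ 2) is diag(1, 1, 2n−1, …, 2n−1, 2n(n−1)(2n−1)). -/
theorem stmt_15 {n : ℕ} (hn : 2 ≤ n) (G : SimpleGraph (Fin (n + 1)))
    [DecidableRel G.Adj]
    (hstar : ∀ u v : Fin (n + 1), G.Adj u v ↔ u ≠ v ∧ (u = 0 ∨ v = 0)) :
    ∃ U W : Matrix (Fin (n + 1)) (Fin (n + 1)) ℤ, IsUnit U.det ∧ IsUnit W.det ∧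
      U * (Matrix.diagonal (fun v => ((∑ u : Fin (n + 1), G.dist u v : ℕ) : ℤ))
            - G.adjMatrix ℤ) * W
        = Matrix.diagonal (fun i : Fin (n + 1) =>
            if (i : ℕ) ≤ 1 then (1 : ℤ)
            else if (i : ℕ) = n then 2 * (n : ℤ) * ((n : ℤ) - 1) * (2 * (n : ℤ) - 1)
            else 2 * (n : ℤ) - 1) := by
  obtain ⟨m, rfl⟩ := Nat.exists_eq_add_of_le' hn
  obtain rfl : G = starGraph 0 := by
    ext u v
    exact (hstar u v).trans starGraph_adj.symm
  obtain ⟨U, W, hU, hW, hUW⟩ := transmissionAdjMatrix_starGraph_unimodularEquiv m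
  refine ⟨U, W, hU, hW, hUW.trans ?_⟩
  congr 1
  funext i
  split_ifs <;> push_cast <;> ring
end
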